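/- arXiv:2112.00741 — 7 statements merged into one kernel-verified Lean document; each statement's English description precedes it below -/
import Mathlib

section
/- If (A_n) is a sequence of events in a probability space with P(A_n) → 0 and ∑_{n=1}^∞ P(A_n ∩ A_{n+1}^c) < ∞, then P(limsup A_n) = 0. -/
open MeasureTheory Filter Set

lemma bn_aux {Ω : Type*} (A : ℕ → Set Ω) (ω : Ω) :
    ∀ j k, ω ∈ A k → ω ∉ A (k + j) → ∃ i ≥ k, ω ∈ A i ∩ (A (i + 1))ᶜ := by
  intro j
  induction j with
  | zero => intro k h h'; exact absurd h h'
  | succ j ih =>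
      intro k h h'
      by_cases hk : ω ∈ A (k + 1)
      · obtain ⟨i, hi, hmem⟩ := ih (k + 1) hk (by
          have : k + 1 + j = k + (j + 1) := by ring
          rwa [this])
        exact ⟨i, le_trans (Nat.le_succ k) hi, hmem⟩
      · exact ⟨k, le_refl k, ⟨h, hk⟩⟩

theorem barndorff_nielsen {Ω : Type*} [MeasurableSpace Ω] (μ : Measure Ω)
    [IsProbabilityMeasure μ] (A : ℕ → Set Ω) (hA : ∀ n, MeasurableSet (A n))
    (h0 : Tendsto (fun n => μ (A n)) atTop (nhds 0))
    (hsum : ∑' n : ℕ, μ (A n ∩ (A (n + 1))ᶜ) < ⊤) :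
    μ (⋂ n, ⋃ k ≥ n, A k) = 0 := by
  set B : ℕ → Set Ω := fun n => A n ∩ (A (n + 1))ᶜ with hB
  set N : Set Ω := ⋃ k, ⋂ j ≥ k, A j with hN
  -- N is null
  have hNnull : μ N = 0 := by
    refine measure_iUnion_null fun k => ?_
    refine le_antisymm ?_ zero_le
    refine ge_of_tendsto h0 ?_
    filter_upwards [eventually_ge_atTop k] with m hm
    exact measure_mono (fun ω hω => by
      simp only [mem_iInter] at hω
      exact hω m hm)
  -- key inclusion
  have hincl : ∀ n, (⋂ n, ⋃ k ≥ n, A k) ⊆ N ∪ ⋃ i, B (i + n) := by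
    intro n ω hω
    simp only [mem_iInter, mem_iUnion] at hω
    obtain ⟨k, hk, hωk⟩ := hω n
    by_cases hall : ∀ j ≥ k, ω ∈ A j
    · left
      exact mem_iUnion.2 ⟨k, by simpa using hall⟩
    · right
      push_neg at hall
      obtain ⟨j, hj, hωj⟩ := hall
      obtain ⟨i, hik, hmem⟩ := bn_aux A ω (j - k) k hωk (by
        rwa [Nat.add_sub_cancel' hj])
      exact mem_iUnion.2 ⟨i - n, by
        have : i - n + n = i := Nat.sub_add_cancel (le_trans hk hik)
        rw [this]; exact hmem⟩
  -- bound
  have hbound : ∀ n, μ (⋂ n, ⋃ k ≥ n, A k) ≤ ∑' i, μ (B (i + n)) := by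
    intro n
    calc μ (⋂ n, ⋃ k ≥ n, A k) ≤ μ (N ∪ ⋃ i, B (i + n)) :=
          measure_mono (hincl n)
      _ ≤ μ N + μ (⋃ i, B (i + n)) := measure_union_le _ _
      _ = μ (⋃ i, B (i + n)) := by rw [hNnull, zero_add]
      _ ≤ ∑' i, μ (B (i + n)) := measure_iUnion_le _
  have htail : Tendsto (fun n => ∑' i, μ (B (i + n))) atTop (nhds 0) :=
    ENNReal.tendsto_sum_nat_add _ hsum.ne
  refine le_antisymm ?_ zero_le
  exact ge_of_tendsto' htail hbound
end

section
/- If (A_n) is a sequence of events in a probability space with P(A_n) → 0 and ∑_{n=1}^∞ P(A_n^c ∩ A_{n+1}) < ∞, then P(limsup A_n) = 0. -/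
open MeasureTheory Filter Set

theorem balakrishnan_stepanov_m_one {Ω : Type*} [MeasurableSpace Ω] (μ : Measure Ω)
    [IsProbabilityMeasure μ] (A : ℕ → Set Ω) (hA : ∀ n, MeasurableSet (A n))
    (h0 : Tendsto (fun n => μ (A n)) atTop (nhds 0))
    (hsum : ∑' n : ℕ, μ ((A n)ᶜ ∩ A (n + 1)) < ⊤) :
    μ (⋂ n, ⋃ k ≥ n, A k) = 0 := by
  set S := ⋂ n, ⋃ k ≥ n, A k with hS
  -- key inclusion
  have key : ∀ n, S ⊆ A n ∪ ⋃ k, (A (k + n))ᶜ ∩ A (k + n + 1) := by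
    intro n ω hω
    have hω' : ω ∈ ⋃ k ≥ n, A k := mem_iInter.mp hω n
    simp only [mem_iUnion] at hω'
    obtain ⟨k, hkn, hk⟩ := hω'
    obtain ⟨j, rfl⟩ := Nat.exists_eq_add_of_le hkn
    clear hω hkn
    induction j with
    | zero => exact Or.inl hk
    | succ m ih =>
      by_cases h : ω ∈ A (n + m)
      · exact ih h
      · refine Or.inr (mem_iUnion.mpr ⟨m, ?_⟩)
        rw [Nat.add_comm m n]
        refine ⟨h, ?_⟩
        have e : n + m + 1 = n + (m + 1) := by ring
        rw [e]; exact hk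
  have hbound : ∀ n, μ S ≤ μ (A n) + ∑' k, μ ((A (k + n))ᶜ ∩ A (k + n + 1)) := by
    intro n
    calc μ S ≤ μ (A n ∪ ⋃ k, (A (k + n))ᶜ ∩ A (k + n + 1)) := measure_mono (key n)
    _ ≤ μ (A n) + μ (⋃ k, (A (k + n))ᶜ ∩ A (k + n + 1)) := measure_union_le _ _
    _ ≤ μ (A n) + ∑' k, μ ((A (k + n))ᶜ ∩ A (k + n + 1)) := by
        gcongr; exact measure_iUnion_le _
  have htail : Tendsto (fun n => ∑' k, μ ((A (k + n))ᶜ ∩ A (k + n + 1))) atTop (nhds 0) :=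
    ENNReal.tendsto_sum_nat_add _ hsum.ne
  have hlim : Tendsto (fun n => μ (A n) + ∑' k, μ ((A (k + n))ᶜ ∩ A (k + n + 1)))
      atTop (nhds 0) := by
    simpa using h0.add htail
  have := ge_of_tendsto hlim (Eventually.of_forall hbound)
  simpa using le_antisymm this zero_le
end

section
/- Let (A_n) be a sequence of events with P(A_n) → 0. If for some fixed m ≥ 1, ∑_{n=1}^∞ P(A_n^c ∩ A_{n+1}^c ∩ … ∩ A_{n+m-1}^c ∩ A_{n+m}) < ∞, then P(limsup A_n) = 0. -/
open MeasureTheory Filter Set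

theorem balakrishnan_stepanov_general {Ω : Type*} [MeasurableSpace Ω] (μ : Measure Ω)
    [IsProbabilityMeasure μ] (A : ℕ → Set Ω) (hA : ∀ n, MeasurableSet (A n))
    (h0 : Tendsto (fun n => μ (A n)) atTop (nhds 0)) (m : ℕ) (hm : 1 ≤ m)
    (hsum : ∑' n : ℕ, μ ((⋂ i ∈ Finset.range m, (A (n + i))ᶜ) ∩ A (n + m)) < ⊤) :
    μ (⋂ n, ⋃ k ≥ n, A k) = 0 := by
  classical
  set B : ℕ → Set Ω := fun n => (⋂ i ∈ Finset.range m, (A (n + i))ᶜ) ∩ A (n + m) with hBdef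
  -- key covering lemma
  have key : ∀ n, (⋃ k ≥ n, A k) ⊆ (⋃ i ∈ Finset.range m, A (n + i)) ∪ ⋃ j : ℕ, B (j + n) := by
    intro n ω hω
    by_cases h : ∃ i ∈ Finset.range m, ω ∈ A (n + i)
    · obtain ⟨i, hi, hωi⟩ := h
      exact Or.inl (mem_biUnion hi hωi)
    · push_neg at h
      obtain ⟨k, hk, hωk⟩ := mem_iUnion₂.mp hω
      have hex : ∃ k, n ≤ k ∧ ω ∈ A k := ⟨k, hk, hωk⟩
      set k₀ := Nat.find hex with hk₀def
      obtain ⟨hnk₀, hωk₀⟩ : n ≤ k₀ ∧ ω ∈ A k₀ := Nat.find_spec hex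
      have hmin : ∀ j, j < k₀ → ¬(n ≤ j ∧ ω ∈ A j) := fun j hj => Nat.find_min hex hj
      have hk₀m : n + m ≤ k₀ := by
        by_contra hc
        push_neg at hc
        have hi : k₀ - n < m := by omega
        have : ω ∈ A (n + (k₀ - n)) := by
          have : n + (k₀ - n) = k₀ := by omega
          rw [this]; exact hωk₀
        exact h (k₀ - n) (Finset.mem_range.mpr hi) this
      refine Or.inr (mem_iUnion.mpr ⟨k₀ - m - n, ?_⟩)
      have heq : k₀ - m - n + n = k₀ - m := by omega
      rw [heq]
      constructor
      · refine mem_biInter fun i hi => ?_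
        have hi' : i < m := Finset.mem_range.mp hi
        intro hωA
        exact hmin (k₀ - m + i) (by omega) ⟨by omega, hωA⟩
      · have : k₀ - m + m = k₀ := by omega
        rw [this]; exact hωk₀
  -- measure bound
  have bound : ∀ n, μ (⋂ n, ⋃ k ≥ n, A k) ≤
      (∑ i ∈ Finset.range m, μ (A (n + i))) + ∑' j : ℕ, μ (B (j + n)) := by
    intro n
    calc μ (⋂ n, ⋃ k ≥ n, A k) ≤ μ (⋃ k ≥ n, A k) := measure_mono (iInter_subset _ n)
      _ ≤ μ ((⋃ i ∈ Finset.range m, A (n + i)) ∪ ⋃ j : ℕ, B (j + n)) :=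
          measure_mono (key n)
      _ ≤ μ (⋃ i ∈ Finset.range m, A (n + i)) + μ (⋃ j : ℕ, B (j + n)) := measure_union_le _ _
      _ ≤ (∑ i ∈ Finset.range m, μ (A (n + i))) + ∑' j : ℕ, μ (B (j + n)) := by
          gcongr
          · exact measure_biUnion_finset_le _ _
          · exact measure_iUnion_le _
  -- the bound tends to 0
  have h1 : Tendsto (fun n => ∑ i ∈ Finset.range m, μ (A (n + i))) atTop (nhds 0) := by
    have := tendsto_finset_sum (Finset.range m)
      (fun i _ => h0.comp (tendsto_add_atTop_nat i))
    simpa using this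
  have h2 : Tendsto (fun n => ∑' j : ℕ, μ (B (j + n))) atTop (nhds 0) :=
    ENNReal.tendsto_sum_nat_add (fun k => μ (B k)) hsum.ne
  have htot : Tendsto (fun n => (∑ i ∈ Finset.range m, μ (A (n + i)))
      + ∑' j : ℕ, μ (B (j + n))) atTop (nhds 0) := by
    simpa using h1.add h2
  exact le_antisymm (ge_of_tendsto' htot bound) zero_le
end

section
/- For any sequence of events (A_n), any n ≥ 1 and m ≥ 1: P(⋃_{k≥n} A_k) ≤ ∑_{j=0}^{m-1} P(A_n^c ∩ … ∩ A_{n+j-1}^c ∩ A_{n+j}) + ∑_{k≥n} P(A_k^c ∩ A_{k+1}^c ∩ … ∩ A_{k+m-1}^c ∩ A_{k+m}). -/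
open MeasureTheory Set

theorem union_tail_bound {Ω : Type*} [MeasurableSpace Ω] (μ : Measure Ω)
    [IsProbabilityMeasure μ] (A : ℕ → Set Ω) (hA : ∀ n, MeasurableSet (A n))
    (n m : ℕ) (hm : 1 ≤ m) :
    μ (⋃ k ≥ n, A k)
      ≤ (∑ j ∈ Finset.range m, μ ((⋂ i ∈ Finset.range j, (A (n + i))ᶜ) ∩ A (n + j)))
        + ∑' k : ℕ, μ ((⋂ i ∈ Finset.range m, (A (n + k + i))ᶜ) ∩ A (n + k + m)) := by
  set B : ℕ → Set Ω := fun j => (⋂ i ∈ Finset.range j, (A (n + i))ᶜ) ∩ A (n + j)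
  set C : ℕ → Set Ω := fun k => (⋂ i ∈ Finset.range m, (A (n + k + i))ᶜ) ∩ A (n + k + m)
  have hsub : (⋃ k ≥ n, A k) ⊆ (⋃ j ∈ Finset.range m, B j) ∪ ⋃ k, C k := by
    intro ω hω
    rw [mem_iUnion₂] at hω
    obtain ⟨k, hk, hωk⟩ := hω
    have hex : ∃ j, ω ∈ A (n + j) := ⟨k - n, by rwa [Nat.add_sub_cancel' hk]⟩
    classical
    let j0 := Nat.find hex
    have hj0 : ω ∈ A (n + j0) := Nat.find_spec hex
    have hlt : ∀ i < j0, ω ∉ A (n + i) := fun i hi => Nat.find_min hex hi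
    by_cases hcase : j0 < m
    · left
      refine mem_iUnion₂.mpr ⟨j0, Finset.mem_range.mpr hcase, ?_, hj0⟩
      simp only [mem_iInter, Finset.mem_range]
      exact fun i hi => hlt i hi
    · right
      push_neg at hcase
      refine mem_iUnion.mpr ⟨j0 - m, ?_, ?_⟩
      · simp only [mem_iInter, Finset.mem_range]
        intro i hi
        have : j0 - m + i < j0 := by omega
        have h2 := hlt _ this
        rwa [← Nat.add_assoc] at h2
      · have : n + (j0 - m) + m = n + j0 := by omega
        rw [this]; exact hj0
  calc μ (⋃ k ≥ n, A k) ≤ μ ((⋃ j ∈ Finset.range m, B j) ∪ ⋃ k, C k) := measure_mono hsub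
    _ ≤ μ (⋃ j ∈ Finset.range m, B j) + μ (⋃ k, C k) := measure_union_le _ _
    _ ≤ (∑ j ∈ Finset.range m, μ (B j)) + ∑' k : ℕ, μ (C k) :=
        add_le_add (measure_biUnion_finset_le _ _) (measure_iUnion_le _)
end

section
/- Let (A_n) be a sequence of events and let Ā_n^c = ⋂_{k≥n} A_k^c. Suppose for each n there exists α_n ≥ 0 with P(A_n^c ∩ Ā_{n+1}^c) = (P(A_n^c))^{α_n} · P(Ā_{n+1}^c). If ∑_{n=1}^∞ α_n P(A_n) = ∞, then P(limsup A_n) = 1. -/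
open MeasureTheory Filter Set
open scoped ENNReal

theorem power_coeff_divergence_implies_limsup_one {Ω : Type*} [MeasurableSpace Ω]
    (μ : Measure Ω) [IsProbabilityMeasure μ] (A : ℕ → Set Ω)
    (hA : ∀ n, MeasurableSet (A n)) (hlt : ∀ n, μ (A n) < 1)
    (α : ℕ → ℝ) (hα : ∀ n, 0 ≤ α n)
    (hpow : ∀ n, μ ((A n)ᶜ ∩ ⋂ k ≥ n + 1, (A k)ᶜ)
      = μ ((A n)ᶜ) ^ (α n) * μ (⋂ k ≥ n + 1, (A k)ᶜ))
    (hdiv : ∑' n : ℕ, ENNReal.ofReal (α n) * μ (A n) = ⊤) :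
    μ (⋂ n, ⋃ k ≥ n, A k) = 1 := by
  set B : ℕ → Set Ω := fun n => ⋂ k ≥ n, (A k)ᶜ with hB
  -- Decomposition of B n
  have hBsucc : ∀ n, B n = (A n)ᶜ ∩ B (n + 1) := by
    intro n
    ext x
    simp only [hB, mem_inter_iff, mem_iInter]
    constructor
    · intro h; exact ⟨h n le_rfl, fun k hk => h k (by omega)⟩
    · rintro ⟨h0, h⟩ k hk
      rcases eq_or_lt_of_le hk with rfl | h'
      · exact h0
      · exact h k h'
  -- real sequence
  set r : ℕ → ℝ := fun k => α k * (μ (A k)).toReal with hr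
  have hμne : ∀ k, μ (A k) ≠ ⊤ := fun k => (measure_lt_top μ _).ne
  have hrnonneg : ∀ k, 0 ≤ r k := fun k =>
    mul_nonneg (hα k) ENNReal.toReal_nonneg
  -- divergence of real partial sums
  have hdiv' : ∑' n : ℕ, ENNReal.ofReal (r n) = ⊤ := by
    rw [← hdiv]
    congr 1
    ext n
    rw [hr, ENNReal.ofReal_mul (hα n), ENNReal.ofReal_toReal (hμne n)]
  have hnotsum : ¬ Summable r := by
    intro hs
    rw [← ENNReal.ofReal_tsum_of_nonneg hrnonneg hs] at hdiv'
    exact ENNReal.ofReal_ne_top hdiv'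
  have hS : Tendsto (fun m => ∑ k ∈ Finset.range m, r k) atTop atTop :=
    (not_summable_iff_tendsto_nat_atTop_of_nonneg hrnonneg).mp hnotsum
  -- each B n is null
  have hBnull : ∀ n, μ (B n) = 0 := by
    intro n
    -- key product identity
    have key : ∀ m, n ≤ m →
        μ (B n) = (∏ k ∈ Finset.Ico n m, μ ((A k)ᶜ) ^ (α k)) * μ (B m) := by
      intro m hm
      induction m, hm using Nat.le_induction with
      | base => simp
      | succ m hm ih =>
        rw [ih, Finset.prod_Ico_succ_top hm]
        have : μ (B m) = μ ((A m)ᶜ) ^ (α m) * μ (B (m + 1)) := by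
          rw [hBsucc m]; exact hpow m
        rw [this]; ring
    -- factor bound
    have hfac : ∀ k, μ ((A k)ᶜ) ^ (α k) ≤ ENNReal.ofReal (Real.exp (-(r k))) := by
      intro k
      set p : ℝ := (μ (A k)).toReal with hp
      have hp0 : 0 ≤ p := ENNReal.toReal_nonneg
      have hp1 : p < 1 := by
        have := ENNReal.toReal_lt_toReal (hμne k) (by simp : (1 : ℝ≥0∞) ≠ ⊤)
        simpa using this.mpr (hlt k)
      have hcompl : μ ((A k)ᶜ) = ENNReal.ofReal (1 - p) := by
        rw [prob_compl_eq_one_sub (hA k), ENNReal.ofReal_sub 1 hp0,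
          ENNReal.ofReal_one, ENNReal.ofReal_toReal (hμne k)]
      rw [hcompl, ENNReal.ofReal_rpow_of_pos (by linarith)]
      apply ENNReal.ofReal_le_ofReal
      have h1 : (1 - p) ^ (α k) ≤ (Real.exp (-p)) ^ (α k) := by
        apply Real.rpow_le_rpow (by linarith) _ (hα k)
        have := Real.add_one_le_exp (-p)
        linarith
      calc (1 - p) ^ (α k) ≤ (Real.exp (-p)) ^ (α k) := h1
        _ = Real.exp (-p * α k) := (Real.exp_mul _ _).symm
        _ = Real.exp (-(r k)) := by rw [hr, hp]; ring_nf
    -- bound μ (B n) by exponential of partial sums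
    have hbound : ∀ m, n ≤ m →
        μ (B n) ≤ ENNReal.ofReal (Real.exp (-(∑ k ∈ Finset.Ico n m, r k))) := by
      intro m hm
      calc μ (B n) = (∏ k ∈ Finset.Ico n m, μ ((A k)ᶜ) ^ (α k)) * μ (B m) :=
            key m hm
        _ ≤ (∏ k ∈ Finset.Ico n m, μ ((A k)ᶜ) ^ (α k)) * 1 := by
            exact mul_le_mul_right prob_le_one _
        _ = ∏ k ∈ Finset.Ico n m, μ ((A k)ᶜ) ^ (α k) := mul_one _
        _ ≤ ∏ k ∈ Finset.Ico n m, ENNReal.ofReal (Real.exp (-(r k))) :=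
            Finset.prod_le_prod' fun k _ => hfac k
        _ = ENNReal.ofReal (∏ k ∈ Finset.Ico n m, Real.exp (-(r k))) := by
            rw [ENNReal.ofReal_prod_of_nonneg]
            intro k _; exact (Real.exp_pos _).le
        _ = ENNReal.ofReal (Real.exp (-(∑ k ∈ Finset.Ico n m, r k))) := by
            rw [← Real.exp_sum, Finset.sum_neg_distrib]
    -- tail partial sums tend to infinity
    have htail : Tendsto (fun m => ∑ k ∈ Finset.Ico n m, r k) atTop atTop := by
      have heq : ∀ m, n ≤ m → ∑ k ∈ Finset.Ico n m, r k =
          (∑ k ∈ Finset.range m, r k) - ∑ k ∈ Finset.range n, r k := by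
        intro m hm
        rw [Finset.sum_Ico_eq_sub _ hm]
      apply Tendsto.congr' _ (tendsto_atTop_add_const_right atTop
        (-(∑ k ∈ Finset.range n, r k)) hS)
      filter_upwards [eventually_ge_atTop n] with m hm
      rw [heq m hm]; ring
    -- conclude
    have hlim : Tendsto (fun m => ENNReal.ofReal
        (Real.exp (-(∑ k ∈ Finset.Ico n m, r k)))) atTop (nhds 0) := by
      rw [← ENNReal.ofReal_zero]
      apply ENNReal.tendsto_ofReal
      exact Real.tendsto_exp_atBot.comp (tendsto_neg_atBot_iff.mpr htail)
    have hle : μ (B n) ≤ 0 := by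
      apply ge_of_tendsto hlim
      filter_upwards [eventually_ge_atTop n] with m hm
      exact hbound m hm
    exact le_antisymm hle zero_le
  -- finish
  have hcompl : (⋂ n, ⋃ k ≥ n, A k)ᶜ = ⋃ n, B n := by
    simp only [hB, compl_iInter, compl_iUnion]
  have hmeas : MeasurableSet (⋂ n, ⋃ k ≥ n, A k) := by
    exact MeasurableSet.iInter fun n => MeasurableSet.iUnion fun k =>
      MeasurableSet.iUnion fun _ => hA k
  rw [← prob_compl_eq_zero_iff hmeas, hcompl]
  exact measure_iUnion_null hBnull
end

section
/- With the notation and hypotheses of the telescoping identity (P(A_i^c ∩ Ā_{i+1}^c) = (P(A_i^c))^{α_i} P(Ā_{i+1}^c), α_i ≥ 0, P(A_i) < 1), one has for all n, k ≥ 1: P(Ā_n^c) ≤ exp(−∑_{i=n}^{n+k-1} α_i P(A_i)) · P(Ā_{n+k}^c). -/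
open MeasureTheory Set
open scoped ENNReal

lemma exp_bound_aux {Ω : Type*} [MeasurableSpace Ω]
    (μ : Measure Ω) [IsProbabilityMeasure μ] (A : ℕ → Set Ω)
    (hA : ∀ n, MeasurableSet (A n)) (hlt : ∀ i, μ (A i) < 1)
    (α : ℕ → ℝ) (hα : ∀ i, 0 ≤ α i)
    (hpow : ∀ i, μ ((A i)ᶜ ∩ ⋂ k ≥ i + 1, (A k)ᶜ)
      = μ ((A i)ᶜ) ^ (α i) * μ (⋂ k ≥ i + 1, (A k)ᶜ))
    (k : ℕ) : ∀ n,
    μ (⋂ j ≥ n, (A j)ᶜ)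
      ≤ ENNReal.ofReal
          (Real.exp (-(∑ i ∈ Finset.Ico n (n + k), α i * (μ (A i)).toReal)))
        * μ (⋂ j ≥ n + k, (A j)ᶜ) := by
  induction k with
  | zero => intro n; simp
  | succ k ih =>
    intro n
    have hset : (⋂ j ≥ n, (A j)ᶜ) = (A n)ᶜ ∩ ⋂ j ≥ n + 1, (A j)ᶜ := by
      ext x
      simp only [mem_iInter, mem_inter_iff]
      constructor
      · intro h; exact ⟨h n le_rfl, fun j hj => h j (by omega)⟩
      · rintro ⟨h1, h2⟩ j hj
        rcases Nat.eq_or_lt_of_le hj with rfl | hj'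
        · exact h1
        · exact h2 j hj'
    set x : ℝ := (μ (A n)).toReal with hx
    have hx0 : 0 ≤ x := ENNReal.toReal_nonneg
    have hx1 : x ≤ 1 := by
      rw [hx]
      exact ENNReal.toReal_le_of_le_ofReal zero_le_one (by simpa using (hlt n).le)
    have hcompl : μ ((A n)ᶜ) = ENNReal.ofReal (1 - x) := by
      rw [prob_compl_eq_one_sub (hA n), hx,
        ENNReal.ofReal_sub _ ENNReal.toReal_nonneg,
        ENNReal.ofReal_toReal (hlt n).ne_top]
      simp
    have h2 : μ ((A n)ᶜ) ^ (α n)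
        ≤ ENNReal.ofReal (Real.exp (-(α n * x))) := by
      rw [hcompl, ENNReal.ofReal_rpow_of_nonneg (by linarith) (hα n)]
      apply ENNReal.ofReal_le_ofReal
      calc (1 - x) ^ (α n) ≤ (Real.exp (-x)) ^ (α n) := by
            apply Real.rpow_le_rpow (by linarith) _ (hα n)
            linarith [Real.add_one_le_exp (-x)]
        _ = Real.exp (-(α n * x)) := by
            rw [← Real.exp_mul]; ring_nf
    have h1 : μ (⋂ j ≥ n, (A j)ᶜ)
        = μ ((A n)ᶜ) ^ (α n) * μ (⋂ j ≥ n + 1, (A j)ᶜ) := by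
      rw [hset, hpow n]
    calc μ (⋂ j ≥ n, (A j)ᶜ)
        ≤ ENNReal.ofReal (Real.exp (-(α n * x))) *
          (ENNReal.ofReal
            (Real.exp (-(∑ i ∈ Finset.Ico (n+1) (n+1+k), α i * (μ (A i)).toReal)))
           * μ (⋂ j ≥ n+1+k, (A j)ᶜ)) := by
          rw [h1]
          exact mul_le_mul' h2 (ih (n+1))
      _ = ENNReal.ofReal
            (Real.exp (-(∑ i ∈ Finset.Ico n (n + (k+1)), α i * (μ (A i)).toReal)))
          * μ (⋂ j ≥ n + (k+1), (A j)ᶜ) := by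
          have he : n + 1 + k = n + (k + 1) := by omega
          rw [he, ← mul_assoc, ← ENNReal.ofReal_mul (Real.exp_nonneg _),
            ← Real.exp_add,
            Finset.sum_eq_sum_Ico_succ_bot (by omega : n < n + (k+1))]
          congr 2
          rw [hx]; ring_nf

theorem exponential_bound {Ω : Type*} [MeasurableSpace Ω]
    (μ : Measure Ω) [IsProbabilityMeasure μ] (A : ℕ → Set Ω)
    (hA : ∀ n, MeasurableSet (A n)) (hlt : ∀ i, μ (A i) < 1)
    (α : ℕ → ℝ) (hα : ∀ i, 0 ≤ α i)
    (hpow : ∀ i, μ ((A i)ᶜ ∩ ⋂ k ≥ i + 1, (A k)ᶜ)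
      = μ ((A i)ᶜ) ^ (α i) * μ (⋂ k ≥ i + 1, (A k)ᶜ))
    (n k : ℕ) (hk : 1 ≤ k) :
    μ (⋂ j ≥ n, (A j)ᶜ)
      ≤ ENNReal.ofReal
          (Real.exp (-(∑ i ∈ Finset.Ico n (n + k), α i * (μ (A i)).toReal)))
        * μ (⋂ j ≥ n + k, (A j)ᶜ) := by
  exact exp_bound_aux μ A hA hlt α hα hpow k n
end

section
/- With the hypotheses of the exponential bound, letting k → ∞ gives for each n ≥ 1: P(⋂_{k≥n} A_k^c) ≤ exp(−∑_{i=n}^∞ α_i P(A_i)) · (1 − P(limsup A_n)), where exp(−∞) is interpreted as 0. -/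
open MeasureTheory Filter Set
open scoped ENNReal

theorem limit_exponential_bound {Ω : Type*} [MeasurableSpace Ω]
    (μ : Measure Ω) [IsProbabilityMeasure μ] (A : ℕ → Set Ω)
    (hA : ∀ n, MeasurableSet (A n)) (hlt : ∀ i, μ (A i) < 1)
    (α : ℕ → ℝ) (hα : ∀ i, 0 ≤ α i)
    (hpow : ∀ i, μ ((A i)ᶜ ∩ ⋂ k ≥ i + 1, (A k)ᶜ)
      = μ ((A i)ᶜ) ^ (α i) * μ (⋂ k ≥ i + 1, (A k)ᶜ))
    (n : ℕ) :
    μ (⋂ k ≥ n, (A k)ᶜ)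
      ≤ (if (∑' i : ℕ, ENNReal.ofReal (α (n + i)) * μ (A (n + i))) = ⊤ then 0
         else ENNReal.ofReal
           (Real.exp (-(∑' i : ℕ, ENNReal.ofReal (α (n + i)) * μ (A (n + i))).toReal)))
        * (1 - μ (⋂ m, ⋃ k ≥ m, A k)) := by
  classical
  set T : ℕ → Set Ω := fun m => ⋂ k ≥ m, (A k)ᶜ with hT
  set F : ℕ → ℝ≥0∞ := fun i => ENNReal.ofReal (α (n + i)) * μ (A (n + i)) with hF
  set S : ℕ → ℝ := fun m => ∑ i ∈ Finset.range m, α (n + i) * (μ (A (n + i))).toReal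
    with hS
  have hTsplit : ∀ i, T i = (A i)ᶜ ∩ T (i + 1) := by
    intro i
    ext x
    simp only [hT, mem_iInter, mem_inter_iff, mem_compl_iff]
    constructor
    · intro h
      exact ⟨h i le_rfl, fun k hk => h k (by omega)⟩
    · rintro ⟨h0, h⟩ k hk
      rcases eq_or_lt_of_le hk with rfl | hk'
      · exact h0
      · exact h k hk'
  have hstep : ∀ i, μ (T i) = μ ((A i)ᶜ) ^ (α i) * μ (T (i + 1)) := by
    intro i
    rw [hTsplit i]
    exact hpow i
  have hiter : ∀ m, μ (T n)
      = (∏ i ∈ Finset.range m, μ ((A (n + i))ᶜ) ^ (α (n + i))) * μ (T (n + m)) := by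
    intro m
    induction m with
    | zero => simp
    | succ m ih =>
      rw [ih, hstep (n + m), Finset.prod_range_succ, mul_assoc]
      rfl
  have hfac : ∀ i, μ ((A i)ᶜ) ^ (α i)
      ≤ ENNReal.ofReal (Real.exp (-(α i * (μ (A i)).toReal))) := by
    intro i
    have h1 : μ ((A i)ᶜ) ≤ ENNReal.ofReal (Real.exp (-(μ (A i)).toReal)) := by
      rw [prob_compl_eq_one_sub (hA i)]
      have heq : (1 : ℝ≥0∞) - μ (A i) = ENNReal.ofReal (1 - (μ (A i)).toReal) := by
        rw [ENNReal.ofReal_sub _ ENNReal.toReal_nonneg, ENNReal.ofReal_one,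
          ENNReal.ofReal_toReal (measure_ne_top μ _)]
      rw [heq]
      exact ENNReal.ofReal_le_ofReal
        (by linarith [Real.add_one_le_exp (-(μ (A i)).toReal)])
    calc μ ((A i)ᶜ) ^ (α i)
        ≤ (ENNReal.ofReal (Real.exp (-(μ (A i)).toReal))) ^ (α i) :=
          ENNReal.rpow_le_rpow h1 (hα i)
      _ = ENNReal.ofReal (Real.exp (-(μ (A i)).toReal) ^ (α i)) := by
          rw [← ENNReal.ofReal_rpow_of_pos (Real.exp_pos _)]
      _ = ENNReal.ofReal (Real.exp (-(α i * (μ (A i)).toReal))) := by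
          rw [← Real.exp_mul]
          ring_nf
  have hprod : ∀ m, (∏ i ∈ Finset.range m, μ ((A (n + i))ᶜ) ^ (α (n + i)))
      ≤ ENNReal.ofReal (Real.exp (-(S m))) := by
    intro m
    calc (∏ i ∈ Finset.range m, μ ((A (n + i))ᶜ) ^ (α (n + i)))
        ≤ ∏ i ∈ Finset.range m,
            ENNReal.ofReal (Real.exp (-(α (n + i) * (μ (A (n + i))).toReal))) :=
          Finset.prod_le_prod' fun i _ => hfac (n + i)
      _ = ENNReal.ofReal
            (∏ i ∈ Finset.range m, Real.exp (-(α (n + i) * (μ (A (n + i))).toReal))) := by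
          rw [ENNReal.ofReal_prod_of_nonneg fun i _ => (Real.exp_pos _).le]
      _ = ENNReal.ofReal (Real.exp (-(S m))) := by
          rw [← Real.exp_sum, hS]
          congr 1
          rw [← Finset.sum_neg_distrib]
  have htail : ∀ m, μ (T m) ≤ 1 - μ (⋂ j, ⋃ k ≥ j, A k) := by
    intro m
    have h1 : T m = (⋃ k ≥ m, A k)ᶜ := by
      simp [hT, compl_iUnion]
    rw [h1, prob_compl_eq_one_sub (MeasurableSet.iUnion fun k => MeasurableSet.iUnion fun _ => hA k)]
    exact tsub_le_tsub_left (measure_mono (iInter_subset _ m)) 1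
  have key : ∀ m, μ (T n)
      ≤ ENNReal.ofReal (Real.exp (-(S m))) * (1 - μ (⋂ j, ⋃ k ≥ j, A k)) := by
    intro m
    rw [hiter m]
    exact mul_le_mul' (hprod m) (htail (n + m))
  have hFfin : ∀ i, F i ≠ ⊤ := fun i =>
    ENNReal.mul_ne_top ENNReal.ofReal_ne_top (measure_ne_top μ _)
  have hSrepr : ∀ m, S m = (∑ i ∈ Finset.range m, F i).toReal := by
    intro m
    rw [ENNReal.toReal_sum fun i _ => hFfin i, hS]
    refine Finset.sum_congr rfl fun i _ => ?_
    rw [hF]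
    rw [ENNReal.toReal_mul, ENNReal.toReal_ofReal (hα _)]
  have hpartial : Tendsto (fun m => ∑ i ∈ Finset.range m, F i) atTop (nhds (∑' i, F i)) :=
    ENNReal.tendsto_nat_tsum F
  by_cases htop : (∑' i, F i) = ⊤
  · rw [if_pos htop, zero_mul]
    have hle : ∀ M : ℝ, μ (T n) ≤ ENNReal.ofReal (Real.exp (-M)) := by
      intro M
      have hev : ∀ᶠ m in atTop, ENNReal.ofReal M < ∑ i ∈ Finset.range m, F i := by
        refine hpartial.eventually (lt_mem_nhds ?_)
        rw [htop]
        exact ENNReal.ofReal_lt_top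
      obtain ⟨m, hm⟩ := hev.exists
      have hfin : (∑ i ∈ Finset.range m, F i) ≠ ⊤ := by
        exact (ENNReal.sum_lt_top.2 fun i _ => (hFfin i).lt_top).ne
      have hM : M ≤ S m := by
        rw [hSrepr m]
        rcases le_or_gt 0 M with h0 | h0
        · calc M = (ENNReal.ofReal M).toReal := (ENNReal.toReal_ofReal h0).symm
            _ ≤ (∑ i ∈ Finset.range m, F i).toReal := ENNReal.toReal_mono hfin hm.le
        · exact h0.le.trans ENNReal.toReal_nonneg
      calc μ (T n) ≤ ENNReal.ofReal (Real.exp (-(S m))) * (1 - μ (⋂ j, ⋃ k ≥ j, A k)) :=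
            key m
        _ ≤ ENNReal.ofReal (Real.exp (-(S m))) * 1 :=
            mul_le_mul_right (tsub_le_self) _
        _ = ENNReal.ofReal (Real.exp (-(S m))) := mul_one _
        _ ≤ ENNReal.ofReal (Real.exp (-M)) :=
            ENNReal.ofReal_le_ofReal (Real.exp_le_exp.mpr (by linarith))
    have hlim : Tendsto (fun M : ℝ => ENNReal.ofReal (Real.exp (-M))) atTop (nhds 0) := by
      have h1 : Tendsto (fun M : ℝ => Real.exp (-M)) atTop (nhds 0) :=
        Real.tendsto_exp_atBot.comp tendsto_neg_atTop_atBot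
      simpa using (ENNReal.tendsto_ofReal h1)
    exact ge_of_tendsto' hlim hle
  · rw [if_neg htop]
    have h2 : Tendsto (fun m => (∑ i ∈ Finset.range m, F i).toReal) atTop
        (nhds (∑' i, F i).toReal) :=
      (ENNReal.tendsto_toReal htop).comp hpartial
    have h3 : Tendsto (fun m => ENNReal.ofReal (Real.exp (-(S m)))
          * (1 - μ (⋂ j, ⋃ k ≥ j, A k))) atTop
        (nhds (ENNReal.ofReal (Real.exp (-(∑' i, F i).toReal))
          * (1 - μ (⋂ j, ⋃ k ≥ j, A k)))) := by
      have hSt : Tendsto S atTop (nhds (∑' i, F i).toReal) := by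
        simpa only [← hSrepr] using h2
      exact ENNReal.Tendsto.mul_const
        (ENNReal.tendsto_ofReal ((Real.continuous_exp.tendsto _).comp hSt.neg))
        (Or.inl (ENNReal.ofReal_pos.mpr (Real.exp_pos _)).ne')
    exact ge_of_tendsto' h3 key
end
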